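/- With the Schur algorithm data (φ_n, ψ_n, a_n, ρ_n, 𝓔_n^j), the identity ψ_n/(ψ_j (1 + 𝓔_n^j φ_n)) = 𝓠_n^j holds on the disk; in particular this quotient is a polynomial of degree at most n - j - 1. -/

import Mathlib

open Complex ComplexConjugate Polynomial

/-- The column vectors `[𝓟_n^j; 𝓠_n^j]` of the ordered `2×2` matrix products
`∏^←_{k=j}^{n-1} (1/ρ_k) [[z, conj a_k], [a_k z, 1]]` applied to `[0; 1]`;
the argument `m` stands for `n - j`. -/
noncomputable def schurPQ (a : ℕ → ℂ) (j : ℕ) : ℕ → Polynomial ℂ × Polynomial ℂ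
  | 0 => (0, 1)
  | m + 1 =>
    let pq := schurPQ a j m
    let k := j + m
    (((Real.sqrt (1 - ‖a k‖ ^ 2) : ℝ) : ℂ)⁻¹ •
        (Polynomial.X * pq.1 + Polynomial.C (conj (a k)) * pq.2),
     ((Real.sqrt (1 - ‖a k‖ ^ 2) : ℝ) : ℂ)⁻¹ •
        (Polynomial.C (a k) * Polynomial.X * pq.1 + pq.2))

/-- The rational functions `𝓔_n^j = 𝓟_n^j / 𝓠_n^j`; the argument `m` stands for `n - j`. -/
noncomputable def schurE (a : ℕ → ℂ) (j m : ℕ) (z : ℂ) : ℂ :=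
  (schurPQ a j m).1.eval z / (schurPQ a j m).2.eval z

/-! Write `a_k = f_k(0)`, `ρ_k = √(1 - |a_k|²)`, `φ_k = z f_k` and `[𝓟_k; 𝓠_k] = schurPQ a j (k - j)`.
One step of the matrix recurrence gives `(𝓟_{k+1} φ_{k+1} + 𝓠_{k+1}) (1 - conj a_k f_k) =
ρ_k (𝓟_k φ_k + 𝓠_k)`, and `ψ_{k+1} (1 - conj a_k f_k) = ρ_k ψ_k`, so `ψ_k / (𝓟_k φ_k + 𝓠_k)` does not
depend on `k`; at `k = j` it is `ψ_j`. Dividing by `𝓠` is legitimate on the disk: the matrices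
are `J`-contractive, which keeps `|𝓟(z)| < |𝓠(z)|` for `|z| < 1`, so `𝓠` has no zeros there. -/

lemma normSq_add_mul_sub_normSq_add_conj_mul (c u q : ℂ) :
    normSq (q + c * u) - normSq (u + conj c * q) = (1 - normSq c) * (normSq q - normSq u) := by
  simp only [normSq_apply, add_re, add_im, mul_re, mul_im, conj_re, conj_im]
  ring

lemma norm_add_conj_mul_lt_norm_add_mul {c u q : ℂ} (hc : ‖c‖ < 1) (hu : ‖u‖ < ‖q‖) :
    ‖u + conj c * q‖ < ‖q + c * u‖ := by
  have hc' : normSq c < 1 := by rw [normSq_eq_norm_sq]; nlinarith [norm_nonneg c]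
  have hu' : normSq u < normSq q := by
    rw [normSq_eq_norm_sq, normSq_eq_norm_sq]; nlinarith [norm_nonneg u]
  have h := normSq_add_mul_sub_normSq_add_conj_mul c u q
  have : normSq (u + conj c * q) < normSq (q + c * u) := by nlinarith
  simpa only [norm_def] using Real.sqrt_lt_sqrt (normSq_nonneg _) this

lemma ofReal_sqrt_one_sub_norm_sq_ne_zero {c : ℂ} (hc : ‖c‖ < 1) :
    ((Real.sqrt (1 - ‖c‖ ^ 2) : ℝ) : ℂ) ≠ 0 := by
  have : 0 < Real.sqrt (1 - ‖c‖ ^ 2) := Real.sqrt_pos.mpr (by nlinarith [norm_nonneg c])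
  exact_mod_cast this.ne'

lemma ofReal_sqrt_one_sub_norm_sq_mul_self {c : ℂ} (hc : ‖c‖ ≤ 1) :
    ((Real.sqrt (1 - ‖c‖ ^ 2) : ℝ) : ℂ) * ((Real.sqrt (1 - ‖c‖ ^ 2) : ℝ) : ℂ) =
      1 - conj c * c := by
  rw [← ofReal_mul, Real.mul_self_sqrt (by nlinarith [norm_nonneg c]), mul_comm, mul_conj,
    normSq_eq_norm_sq]
  push_cast
  ring

lemma eval_schurPQ_succ_fst (a : ℕ → ℂ) (j m : ℕ) (z : ℂ) :
    (schurPQ a j (m + 1)).1.eval z = ((Real.sqrt (1 - ‖a (j + m)‖ ^ 2) : ℝ) : ℂ)⁻¹ *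
      (z * (schurPQ a j m).1.eval z + conj (a (j + m)) * (schurPQ a j m).2.eval z) := by
  simp [schurPQ, mul_add]

lemma eval_schurPQ_succ_snd (a : ℕ → ℂ) (j m : ℕ) (z : ℂ) :
    (schurPQ a j (m + 1)).2.eval z = ((Real.sqrt (1 - ‖a (j + m)‖ ^ 2) : ℝ) : ℂ)⁻¹ *
      (a (j + m) * z * (schurPQ a j m).1.eval z + (schurPQ a j m).2.eval z) := by
  simp [schurPQ, mul_assoc, mul_add]

lemma norm_eval_schurPQ_fst_lt_snd {a : ℕ → ℂ} (ha : ∀ k, ‖a k‖ < 1) (j m : ℕ) {z : ℂ}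
    (hz : ‖z‖ < 1) : ‖(schurPQ a j m).1.eval z‖ < ‖(schurPQ a j m).2.eval z‖ := by
  induction m with
  | zero => simp [schurPQ]
  | succ m ih =>
    set p := (schurPQ a j m).1.eval z
    set q := (schurPQ a j m).2.eval z
    have hzp : ‖z * p‖ < ‖q‖ := by
      rw [norm_mul]
      exact lt_of_le_of_lt (mul_le_of_le_one_left (norm_nonneg p) hz.le) ih
    rw [eval_schurPQ_succ_fst, eval_schurPQ_succ_snd, norm_mul, norm_mul]
    refine mul_lt_mul_of_pos_left ?_
      (norm_pos_iff.mpr (inv_ne_zero (ofReal_sqrt_one_sub_norm_sq_ne_zero (ha (j + m)))))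
    calc ‖z * p + conj (a (j + m)) * q‖ < ‖q + a (j + m) * (z * p)‖ :=
          norm_add_conj_mul_lt_norm_add_mul (ha (j + m)) hzp
      _ = ‖a (j + m) * z * p + q‖ := by ring_nf

lemma eval_schurPQ_snd_ne_zero {a : ℕ → ℂ} (ha : ∀ k, ‖a k‖ < 1) (j m : ℕ) {z : ℂ}
    (hz : ‖z‖ < 1) : (schurPQ a j m).2.eval z ≠ 0 := by
  intro h
  have := norm_eval_schurPQ_fst_lt_snd ha j m hz
  rw [h, norm_zero] at this
  exact (norm_nonneg _).not_gt this

/-- The second component of one step of the matrix recurrence, with `w = f_k(z)`,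
`w' = f_{k+1}(z)` and `ρ² = 1 - |a|²`. -/
lemma schur_step_snd {a ρ z p q w w' : ℂ} (hρ : ρ ≠ 0) (hρa : ρ * ρ = 1 - conj a * a)
    (hw : w' * (z * (1 - conj a * w)) = w - a) :
    (ρ⁻¹ * (z * p + conj a * q) * (z * w') + ρ⁻¹ * (a * z * p + q)) * (1 - conj a * w) =
      ρ * (p * (z * w) + q) := by
  have h : (z * p + conj a * q) * (z * w') * (1 - conj a * w) + (a * z * p + q) * (1 - conj a * w)
      = ρ * ρ * (p * (z * w) + q) := by
    linear_combination (z * p + conj a * q) * hw - (p * (z * w) + q) * hρa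
  calc _ = ρ⁻¹ * ((z * p + conj a * q) * (z * w') * (1 - conj a * w)
          + (a * z * p + q) * (1 - conj a * w)) := by ring
    _ = ρ * (p * (z * w) + q) := by rw [h]; field_simp

lemma one_sub_conj_mul_ne_zero {a w : ℂ} (ha : ‖a‖ < 1) (hw : ‖w‖ ≤ 1) : 1 - conj a * w ≠ 0 := by
  have : ‖conj a * w‖ < 1 := by
    rw [norm_mul, RCLike.norm_conj]
    exact lt_of_le_of_lt (mul_le_of_le_one_right (norm_nonneg a) hw) ha
  intro h
  rw [← sub_eq_zero.mp h, norm_one] at this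
  exact this.false

lemma schur_outer_eq_mul_schurPQ (f ψ : ℕ → ℂ → ℂ)
    (hfb : ∀ n, ∀ z ∈ Metric.ball (0 : ℂ) 1, ‖f n z‖ ≤ 1)
    (ha : ∀ n, ‖f n 0‖ < 1)
    (hrec : ∀ n, ∀ z ∈ Metric.ball (0 : ℂ) 1,
      f (n + 1) z * (z * (1 - conj (f n 0) * f n z)) = f n z - f n 0)
    (hψrec : ∀ n, ∀ z ∈ Metric.ball (0 : ℂ) 1,
      ψ (n + 1) z * (1 - conj (f n 0) * f n z) =
        ψ n z * ((Real.sqrt (1 - ‖f n 0‖ ^ 2) : ℝ) : ℂ))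
    (j m : ℕ) {z : ℂ} (hz : z ∈ Metric.ball (0 : ℂ) 1) :
    ψ (j + m) z = ψ j z * ((schurPQ (fun i => f i 0) j m).1.eval z * (z * f (j + m) z)
      + (schurPQ (fun i => f i 0) j m).2.eval z) := by
  induction m with
  | zero => simp [schurPQ]
  | succ m ih =>
    set n := j + m
    have hD := one_sub_conj_mul_ne_zero (ha n) (hfb n z hz)
    have hstep := schur_step_snd (p := (schurPQ (fun i => f i 0) j m).1.eval z)
      (q := (schurPQ (fun i => f i 0) j m).2.eval z)
      (ofReal_sqrt_one_sub_norm_sq_ne_zero (ha n))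
      (ofReal_sqrt_one_sub_norm_sq_mul_self (ha n).le) (hrec n z hz)
    rw [← add_assoc, eval_schurPQ_succ_fst, eval_schurPQ_succ_snd]
    refine mul_right_cancel₀ hD ?_
    rw [hψrec n z hz, mul_assoc, hstep, ih]
    ring

theorem stmt13_general (f ψ : ℕ → ℂ → ℂ)
    (hfb : ∀ n, ∀ z ∈ Metric.ball (0 : ℂ) 1, ‖f n z‖ ≤ 1)
    (ha : ∀ n, ‖f n 0‖ < 1)
    (hrec : ∀ n, ∀ z ∈ Metric.ball (0 : ℂ) 1,
      f (n + 1) z * (z * (1 - conj (f n 0) * f n z)) = f n z - f n 0)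
    (hψrec : ∀ n, ∀ z ∈ Metric.ball (0 : ℂ) 1,
      ψ (n + 1) z * (1 - conj (f n 0) * f n z) =
        ψ n z * ((Real.sqrt (1 - ‖f n 0‖ ^ 2) : ℝ) : ℂ)) :
    ∀ j m : ℕ, ∀ z ∈ Metric.ball (0 : ℂ) 1,
      ψ (j + m) z =
        ψ j z * (1 + schurE (fun i => f i 0) j m z * (z * f (j + m) z)) *
          ((schurPQ (fun i => f i 0) j m).2.eval z) := by
  intro j m z hz
  have hq := eval_schurPQ_snd_ne_zero ha j m (mem_ball_zero_iff.mp hz)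
  rw [schur_outer_eq_mul_schurPQ f ψ hfb ha hrec hψrec j m hz, schurE]
  field_simp
  ring

theorem stmt13 (f ψ : ℕ → ℂ → ℂ)
    (hfa : ∀ n, DifferentiableOn ℂ (f n) (Metric.ball 0 1))
    (hfb : ∀ n, ∀ z ∈ Metric.ball (0 : ℂ) 1, ‖f n z‖ ≤ 1)
    (ha : ∀ n, ‖f n 0‖ < 1)
    (hrec : ∀ n, ∀ z ∈ Metric.ball (0 : ℂ) 1,
      f (n + 1) z * (z * (1 - conj (f n 0) * f n z)) = f n z - f n 0)
    (hψa : ∀ n, DifferentiableOn ℂ (ψ n) (Metric.ball 0 1))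
    (hψ0 : ∀ n, (ψ n 0).im = 0 ∧ 0 < (ψ n 0).re)
    (hψrec : ∀ n, ∀ z ∈ Metric.ball (0 : ℂ) 1,
      ψ (n + 1) z * (1 - conj (f n 0) * f n z) =
        ψ n z * ((Real.sqrt (1 - ‖f n 0‖ ^ 2) : ℝ) : ℂ)) :
    ∀ j m : ℕ, ∀ z ∈ Metric.ball (0 : ℂ) 1,
      ψ (j + m) z =
        ψ j z * (1 + schurE (fun i => f i 0) j m z * (z * f (j + m) z)) *
          ((schurPQ (fun i => f i 0) j m).2.eval z) :=
  stmt13_general f ψ hfb ha hrec hψrec
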